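/- For every integer i ≥ 1 and every real number t ≥ 0, writing s = ⌊t⌋, one has (s²(s+1) + 2(i² − s²)·t)/(2i(i+1)) ≤ T_i(t), where T_i(t) = (−t³ + 2t² + 2i²·t)/(2i(i+1)). -/
import Mathlib


open Real

/-- For an integer `i ≥ 1` and real `t`, `T_i(t) = (−t³ + 2t² + 2i²t)/(2i(i+1))`. -/
noncomputable def Tfun (i : ℕ) (t : ℝ) : ℝ :=
  (-t ^ 3 + 2 * t ^ 2 + 2 * (i : ℝ) ^ 2 * t) / (2 * (i : ℝ) * ((i : ℝ) + 1))

/-- The one-step recurrence expression, with `s = ⌊t⌋`, is bounded above by `T_i(t)`. -/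
theorem recurrence_le_Tfun (i : ℕ) (hi : 1 ≤ i) (t : ℝ) (ht : 0 ≤ t) :
    ((⌊t⌋ : ℝ) ^ 2 * ((⌊t⌋ : ℝ) + 1) + 2 * ((i : ℝ) ^ 2 - (⌊t⌋ : ℝ) ^ 2) * t) /
        (2 * (i : ℝ) * ((i : ℝ) + 1)) ≤ Tfun i t := by
  have hi' : (1 : ℝ) ≤ (i : ℝ) := by exact_mod_cast hi
  have hden : 0 < 2 * (i : ℝ) * ((i : ℝ) + 1) := by nlinarith
  have hs0 : (0 : ℝ) ≤ (⌊t⌋ : ℝ) := by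
    exact_mod_cast Int.floor_nonneg.mpr ht
  have h1 : (⌊t⌋ : ℝ) ≤ t := Int.floor_le t
  have h2 : t < (⌊t⌋ : ℝ) + 1 := Int.lt_floor_add_one t
  unfold Tfun
  rw [div_le_div_iff₀ hden hden]
  set s : ℝ := (⌊t⌋ : ℝ)
  nlinarith [mul_nonneg (mul_nonneg hs0 hs0) (by linarith : (0:ℝ) ≤ s + 1 - t),
    mul_nonneg (mul_nonneg hs0 (by linarith : (0:ℝ) ≤ t - s)) (by linarith : (0:ℝ) ≤ 4 - 3*(t - s)),
    mul_nonneg (mul_nonneg (by linarith : (0:ℝ) ≤ t - s) (by linarith : (0:ℝ) ≤ t - s)) (by linarith : (0:ℝ) ≤ 2 - (t - s)),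
    hden.le, sq_nonneg (t - s)]
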